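/- There exists a universal constant K0 > 0 (independent of all model parameters) such that in the Gaussian model setup with μ ≠ 0, if ε < min_{j : μ(j) > 0} μ(j), then the sequence (g_n) is strictly increasing on the range of integers n with n < min_{j : μ(j) > 0} max{3/2, 2 log(1/(1 − ε/μ(j)))} · (σ(j)/μ(j))², and strictly decreasing on the range of integers n with n ≥ max_{j : μ(j) > 0} (K0 + 2 log(1/(1 − ε/μ(j)))) · (σ(j)/μ(j))². -/

import Mathlib

/-!
Coordinatewise, with `x = m √n / s` and `δ = ε / m`, the expected value of
`sign u - sign (u - ε sign u)` for `u ~ N(m, s²/n)` is `2 (2π)^{-1/2} G(x)`, where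
`G(x) = 2 N(x) - N((1 - δ) x) - N((1 + δ) x)` and `N(y) = ∫₀^y exp (-z²/2) dz`.
Hence `x G'(x) = 2 H(x) - H((1 - δ) x) - H((1 + δ) x)` with `H(y) = y exp (-y²/2)`, and the
monotonicity of `g_n` is a comparison of `H` at the midpoint `x` with `H` at the two symmetric
points `x ∓ δ x`.
* If `x² ≤ 3/2`, then `H'(x + r) < H'(x - r)` for `0 < r < x`, because `H'` decreases on
  `[0, √3]` and beyond `√3` it is negative while `x - r < 1`.
* If `3/2 < x² < 2 log (1/(1 - δ))`, then `H` decreases past `x > 1`, and `H((1 - δ) x) ≤ (1 - δ) x`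
  is already below `H(x) = x exp (-x²/2)`.
* If `x² ≥ 10 + 2 log (1/(1 - δ))`, either `(1 - δ) x ≤ √3`, so that `H((1 - δ) x)` alone exceeds
  `2 H(x)`, or both points lie in `[√3, ∞)`, where `H` is convex.
Summing over the coordinates with weights `μ(j) ≥ 0` gives the theorem with `K0 = 10`.
-/

open Real MeasureTheory ProbabilityTheory Filter Topology

/-- Generalization gap `g_n = W · E[⟨sign(u) − sign(u − ε·sign(u)), μ⟩]` in the Gaussian
model, where `u` has independent coordinates `u(j) ~ N(μ(j), σ(j)²/n)`. -/
noncomputable def gaussGap (d : ℕ) (W ε : ℝ) (μ σ : Fin d → ℝ) (n : ℕ) : ℝ :=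
  W * ∫ u : Fin d → ℝ,
      (∑ j, (Real.sign (u j) - Real.sign (u j - ε * Real.sign (u j))) * μ j)
    ∂(Measure.pi fun j => gaussianReal (μ j) (Real.toNNReal ((σ j) ^ 2 / n)))

open Set
open scoped NNReal

noncomputable def gauss (z : ℝ) : ℝ := exp (-z ^ 2 / 2)

/-- `gaussIntegral y = √(2π) (Φ(y) - 1/2)`, with `Φ` the standard normal distribution function. -/
noncomputable def gaussIntegral (y : ℝ) : ℝ := ∫ z in (0)..y, gauss z

noncomputable def mulGauss (y : ℝ) : ℝ := y * gauss y

noncomputable def gapProfile (δ x : ℝ) : ℝ :=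
  2 * gaussIntegral x - gaussIntegral ((1 - δ) * x) - gaussIntegral ((1 + δ) * x)

noncomputable def signGap (ε x : ℝ) : ℝ := Real.sign x - Real.sign (x - ε * Real.sign x)

lemma two_mul_lt_add_of_deriv_lt {f : ℝ → ℝ} (hf : Differentiable ℝ f) {x R : ℝ} (hR : 0 < R)
    (h : ∀ r ∈ Ioo 0 R, deriv f (x - r) < deriv f (x + r)) :
    2 * f x < f (x - R) + f (x + R) := by
  set φ : ℝ → ℝ := fun r => f (x - r) + f (x + r)
  have hφ : ∀ r, HasDerivAt φ (-deriv f (x - r) + deriv f (x + r)) r := fun r => by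
    refine (((hf (x - r)).hasDerivAt.comp r ((hasDerivAt_id' r).const_sub x)).add
      ((hf (x + r)).hasDerivAt.comp r ((hasDerivAt_id' r).const_add x))).congr_deriv ?_
    ring
  have hmono : StrictMonoOn φ (Icc 0 R) :=
    strictMonoOn_of_deriv_pos (convex_Icc 0 R)
      (continuous_iff_continuousAt.2 fun r => (hφ r).continuousAt).continuousOn fun r hr => by
        rw [interior_Icc] at hr
        rw [(hφ r).deriv]
        linarith [h r hr]
  have := hmono (left_mem_Icc.2 hR.le) (right_mem_Icc.2 hR.le) hR
  simp only [φ, sub_zero, add_zero] at this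
  linarith

lemma add_lt_two_mul_of_deriv_lt {f : ℝ → ℝ} (hf : Differentiable ℝ f) {x R : ℝ} (hR : 0 < R)
    (h : ∀ r ∈ Ioo 0 R, deriv f (x + r) < deriv f (x - r)) :
    f (x - R) + f (x + R) < 2 * f x := by
  have := two_mul_lt_add_of_deriv_lt hf.neg hR fun r hr => by
    simp only [deriv.neg', neg_lt_neg_iff]
    exact h r hr
  simp only [Pi.neg_apply] at this
  linarith

lemma Real.measurable_sign : Measurable Real.sign :=
  Monotone.measurable fun a b hab => by unfold Real.sign; split_ifs <;> linarith

lemma div_mul_sqrt_lt_sqrt_iff {a b t M : ℝ} (ha : 0 < a) (hb : 0 < b) (ht : 0 ≤ t) :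
    a / b * √t < √M ↔ t < M * (b / a) ^ 2 := by
  rw [lt_sqrt (by positivity), mul_pow, sq_sqrt ht, ← lt_div_iff₀' (by positivity),
    div_eq_mul_inv, ← inv_pow, inv_div]

lemma sqrt_le_div_mul_sqrt_iff {a b t M : ℝ} (ha : 0 < a) (hb : 0 < b) (ht : 0 ≤ t) :
    √M ≤ a / b * √t ↔ M * (b / a) ^ 2 ≤ t := by
  rw [sqrt_le_left (by positivity), mul_pow, sq_sqrt ht, ← div_le_iff₀' (by positivity),
    div_eq_mul_inv, ← inv_pow, inv_div]

lemma gauss_pos (z : ℝ) : 0 < gauss z := exp_pos _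

lemma gauss_neg (z : ℝ) : gauss (-z) = gauss z := by simp [gauss]

lemma continuous_gauss : Continuous gauss := by unfold gauss; fun_prop

lemma hasDerivAt_gauss (y : ℝ) : HasDerivAt gauss (-y * gauss y) y :=
  ((hasDerivAt_pow 2 y).neg.div_const 2).exp.congr_deriv (by
    simp only [gauss, Pi.neg_apply]; ring)

lemma hasDerivAt_gaussIntegral (y : ℝ) : HasDerivAt gaussIntegral (gauss y) y :=
  intervalIntegral.integral_hasDerivAt_right (continuous_gauss.intervalIntegrable 0 y)
    continuous_gauss.stronglyMeasurable.stronglyMeasurableAtFilter continuous_gauss.continuousAt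

lemma continuous_gaussIntegral : Continuous gaussIntegral :=
  continuous_iff_continuousAt.2 fun y => (hasDerivAt_gaussIntegral y).continuousAt

lemma gaussIntegral_neg (y : ℝ) : gaussIntegral (-y) = -gaussIntegral y := by
  have h := intervalIntegral.integral_comp_neg (a := 0) (b := y) gauss
  simp only [gauss_neg, neg_zero] at h
  rw [gaussIntegral, gaussIntegral, intervalIntegral.integral_symm, ← h]

lemma integral_gauss (a b : ℝ) : ∫ z in a..b, gauss z = gaussIntegral b - gaussIntegral a := by
  rw [gaussIntegral, gaussIntegral, ← intervalIntegral.integral_add_adjacent_intervals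
    (continuous_gauss.intervalIntegrable 0 a) (continuous_gauss.intervalIntegrable a b)]
  ring

lemma hasDerivAt_mulGauss (y : ℝ) : HasDerivAt mulGauss ((1 - y ^ 2) * gauss y) y :=
  ((hasDerivAt_id' y).mul (hasDerivAt_gauss y)).congr_deriv (by ring)

lemma deriv_mulGauss : deriv mulGauss = fun y => (1 - y ^ 2) * gauss y :=
  funext fun y => (hasDerivAt_mulGauss y).deriv

lemma differentiable_mulGauss : Differentiable ℝ mulGauss :=
  fun y => (hasDerivAt_mulGauss y).differentiableAt

lemma hasDerivAt_deriv_mulGauss (y : ℝ) :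
    HasDerivAt (deriv mulGauss) (y * (y ^ 2 - 3) * gauss y) y := by
  rw [deriv_mulGauss]
  exact (((hasDerivAt_pow 2 y).const_sub 1).mul (hasDerivAt_gauss y)).congr_deriv (by
    simp only [Nat.cast_ofNat, Nat.add_one_sub_one, pow_one, neg_mul, mul_neg]; ring)

lemma continuous_deriv_mulGauss : Continuous (deriv mulGauss) :=
  continuous_iff_continuousAt.2 fun y => (hasDerivAt_deriv_mulGauss y).continuousAt

lemma strictAntiOn_mulGauss : StrictAntiOn mulGauss (Ici 1) := by
  refine strictAntiOn_of_deriv_neg (convex_Ici 1) differentiable_mulGauss.continuous.continuousOn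
    fun y hy => ?_
  rw [interior_Ici, mem_Ioi] at hy
  rw [deriv_mulGauss]
  exact mul_neg_of_neg_of_pos (by nlinarith) (gauss_pos y)

lemma strictAntiOn_deriv_mulGauss : StrictAntiOn (deriv mulGauss) (Icc 0 √3) := by
  refine strictAntiOn_of_deriv_neg (convex_Icc 0 √3) continuous_deriv_mulGauss.continuousOn
    fun y hy => ?_
  rw [interior_Icc] at hy
  rw [(hasDerivAt_deriv_mulGauss y).deriv]
  have : y ^ 2 < 3 := (lt_sqrt hy.1.le).1 hy.2
  exact mul_neg_of_neg_of_pos (mul_neg_of_pos_of_neg hy.1 (by linarith)) (gauss_pos y)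

lemma strictMonoOn_deriv_mulGauss : StrictMonoOn (deriv mulGauss) (Ici √3) := by
  refine strictMonoOn_of_deriv_pos (convex_Ici √3) continuous_deriv_mulGauss.continuousOn
    fun y hy => ?_
  rw [interior_Ici, mem_Ioi] at hy
  rw [(hasDerivAt_deriv_mulGauss y).deriv]
  have hy0 : 0 < y := (sqrt_nonneg 3).trans_lt hy
  have : 3 < y ^ 2 := (sqrt_lt' hy0).1 hy
  exact mul_pos (mul_pos hy0 (by linarith)) (gauss_pos y)

lemma deriv_mulGauss_add_lt_sub {x r : ℝ} (hr : 0 < r) (hrx : r < x) (hx : x ^ 2 ≤ 3 / 2) :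
    deriv mulGauss (x + r) < deriv mulGauss (x - r) := by
  have h3 := sq_sqrt (show (0 : ℝ) ≤ 3 by norm_num)
  rcases le_or_gt (x + r) √3 with h | h
  · exact strictAntiOn_deriv_mulGauss ⟨by linarith, by linarith⟩ ⟨by linarith, h⟩ (by linarith)
  · -- past `√3` the slope on the right is negative, while `x - r < 1` keeps the left one positive
    have h_add : 1 < (x + r) ^ 2 := by nlinarith [sqrt_nonneg 3]
    have h_sub : (x - r) ^ 2 < 1 := by nlinarith [sqrt_nonneg 3]
    rw [deriv_mulGauss]
    nlinarith [gauss_pos (x + r), gauss_pos (x - r)]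

lemma mulGauss_le_self {y : ℝ} (hy : 0 ≤ y) : mulGauss y ≤ y :=
  mul_le_of_le_one_right hy (exp_le_one_iff.2 (by nlinarith [sq_nonneg y]))

lemma mulGauss_sub_add_lt_two_mul_of_sq_le {x r : ℝ} (hr : 0 < r) (hrx : r < x)
    (hx : x ^ 2 ≤ 3 / 2) : mulGauss (x - r) + mulGauss (x + r) < 2 * mulGauss x :=
  add_lt_two_mul_of_deriv_lt differentiable_mulGauss hr fun _ hr' =>
    deriv_mulGauss_add_lt_sub hr'.1 (hr'.2.trans hrx) hx

lemma mulGauss_add_lt_two_mul {δ x : ℝ} (hδ : 0 < δ) (hδ1 : δ < 1) (hx : 0 < x)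
    (h : x ^ 2 < max (3 / 2) (2 * log (1 / (1 - δ)))) :
    mulGauss ((1 - δ) * x) + mulGauss ((1 + δ) * x) < 2 * mulGauss x := by
  rcases le_or_gt (x ^ 2) (3 / 2) with hsmall | hlarge
  · convert mulGauss_sub_add_lt_two_mul_of_sq_le (mul_pos hδ hx) (by nlinarith) hsmall using 3
      <;> ring
  have hlog : x ^ 2 / 2 < log (1 / (1 - δ)) := by
    rcases lt_max_iff.1 h with h' | h' <;> linarith
  have hx1 : 1 < x := by nlinarith
  have hleft : (1 - δ) * x < mulGauss x := by
    have : 1 - δ < gauss x := by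
      rw [gauss, neg_div, exp_neg, ← one_div, lt_one_div (by linarith) (exp_pos _)]
      exact (lt_log_iff_exp_lt (one_div_pos.2 (by linarith))).1 hlog
    exact (mul_lt_mul_iff_left₀ hx).2 this |>.trans_eq (mul_comm _ _)
  have hright : mulGauss ((1 + δ) * x) < mulGauss x :=
    strictAntiOn_mulGauss (mem_Ici.2 hx1.le) (mem_Ici.2 (by nlinarith)) (by nlinarith)
  linarith [mulGauss_le_self (show 0 ≤ (1 - δ) * x by nlinarith)]

lemma two_mul_lt_mulGauss_add {δ x : ℝ} (hδ : 0 < δ) (hδ1 : δ < 1) (hx : 0 < x)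
    (h : 10 + 2 * log (1 / (1 - δ)) ≤ x ^ 2) :
    2 * mulGauss x < mulGauss ((1 - δ) * x) + mulGauss ((1 + δ) * x) := by
  set y := (1 - δ) * x
  have hy : 0 < y := mul_pos (by linarith) hx
  rcases le_or_gt y √3 with hsmall | hlarge
  · have hHx : mulGauss x ≤ exp (-5) * y := by
      have : gauss x ≤ exp (-5) * (1 - δ) := by
        rw [gauss, ← exp_log (show 0 < 1 - δ by linarith), ← exp_add, exp_le_exp]
        rw [one_div, log_inv] at h
        linarith
      calc mulGauss x ≤ x * (exp (-5) * (1 - δ)) := mul_le_mul_of_nonneg_left this hx.le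
        _ = exp (-5) * y := by ring
    have hHy : 2 * (exp (-5) * y) < mulGauss y := by
      have hy2 : y ^ 2 ≤ 3 := by nlinarith [sq_sqrt (show (0 : ℝ) ≤ 3 by norm_num)]
      have : 2 * exp (-5) < gauss y :=
        calc 2 * exp (-5) < exp (7 / 2) * exp (-5) := by
              gcongr; linarith [add_one_le_exp (7 / 2 : ℝ)]
          _ = exp (-3 / 2) := by rw [← exp_add]; norm_num
          _ ≤ gauss y := exp_le_exp.2 (by linarith)
      unfold mulGauss; nlinarith
    have : 0 < mulGauss ((1 + δ) * x) := mul_pos (by positivity) (gauss_pos _)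
    linarith
  · have := two_mul_lt_add_of_deriv_lt differentiable_mulGauss (x := x) (mul_pos hδ hx)
      fun r hr => strictMonoOn_deriv_mulGauss (mem_Ici.2 (by nlinarith [hr.2]))
        (mem_Ici.2 (by nlinarith [hr.1, hr.2])) (by linarith [hr.1])
    rwa [show x - δ * x = y by ring, show x + δ * x = (1 + δ) * x by ring] at this

lemma continuous_gapProfile (δ : ℝ) : Continuous (gapProfile δ) := by
  unfold gapProfile
  have := continuous_gaussIntegral
  fun_prop

lemma hasDerivAt_gapProfile (δ : ℝ) {x : ℝ} (hx : x ≠ 0) :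
    HasDerivAt (gapProfile δ)
      ((2 * mulGauss x - mulGauss ((1 - δ) * x) - mulGauss ((1 + δ) * x)) / x) x := by
  have hscaled (c : ℝ) : HasDerivAt (fun x => gaussIntegral (c * x)) (gauss (c * x) * c) x :=
    (hasDerivAt_gaussIntegral (c * x)).comp x ((hasDerivAt_id' x).const_mul c |>.congr_deriv
      (mul_one c))
  refine ((((hasDerivAt_gaussIntegral x).const_mul 2).sub (hscaled (1 - δ))).sub
    (hscaled (1 + δ))).congr_deriv ?_
  simp only [mulGauss]
  field_simp

lemma gapProfile_strictMonoOn {δ : ℝ} (hδ : 0 < δ) (hδ1 : δ < 1) :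
    StrictMonoOn (gapProfile δ) (Icc 0 √(max (3 / 2) (2 * log (1 / (1 - δ))))) := by
  refine strictMonoOn_of_deriv_pos (convex_Icc _ _) (continuous_gapProfile δ).continuousOn
    fun x hx => ?_
  rw [interior_Icc] at hx
  rw [(hasDerivAt_gapProfile δ hx.1.ne').deriv]
  have := mulGauss_add_lt_two_mul hδ hδ1 hx.1 ((lt_sqrt hx.1.le).1 hx.2)
  exact div_pos (by linarith) hx.1

lemma gapProfile_strictAntiOn {δ : ℝ} (hδ : 0 < δ) (hδ1 : δ < 1) :
    StrictAntiOn (gapProfile δ) (Ici √(10 + 2 * log (1 / (1 - δ)))) := by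
  refine strictAntiOn_of_deriv_neg (convex_Ici _) (continuous_gapProfile δ).continuousOn
    fun x hx => ?_
  rw [interior_Ici, mem_Ioi] at hx
  have hx0 : 0 < x := (sqrt_nonneg _).trans_lt hx
  rw [(hasDerivAt_gapProfile δ hx0.ne').deriv]
  have := two_mul_lt_mulGauss_add hδ hδ1 hx0 ((sqrt_lt' hx0).1 hx).le
  exact div_neg_of_neg_of_pos (by linarith) hx0

lemma signGap_eq_indicator {ε x : ℝ} (hx : x ≠ ε) (hx' : x ≠ -ε) :
    signGap ε x = (Ioo 0 ε).indicator (fun _ => 2) x - (Ioo (-ε) 0).indicator (fun _ => 2) x := by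
  simp only [signGap, Real.sign, Set.indicator, mem_Ioo]
  split_ifs <;> grind

lemma integral_signGap (γ : Measure ℝ) [IsFiniteMeasure γ] [NullSingletonClass γ] (ε : ℝ) :
    ∫ x, signGap ε x ∂γ = 2 * γ.real (Ioo 0 ε) - 2 * γ.real (Ioo (-ε) 0) := by
  have hae : signGap ε =ᵐ[γ]
      fun x => (Ioo 0 ε).indicator (fun _ => 2) x - (Ioo (-ε) 0).indicator (fun _ => 2) x := by
    filter_upwards [measure_eq_zero_iff_ae_notMem.1 (measure_singleton ε),
      measure_eq_zero_iff_ae_notMem.1 (measure_singleton (-ε))] with x hx hx'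
    exact signGap_eq_indicator hx hx'
  rw [integral_congr_ae hae, integral_sub, integral_indicator_const _ measurableSet_Ioo,
    integral_indicator_const _ measurableSet_Ioo, smul_eq_mul, smul_eq_mul, mul_comm,
    mul_comm (γ.real _)]
  all_goals exact (integrable_const _).indicator measurableSet_Ioo

lemma gaussianReal_real_Ioo (m : ℝ) {v : ℝ≥0} (hv : v ≠ 0) {a b : ℝ} (hab : a ≤ b) :
    (gaussianReal m v).real (Ioo a b)
      = (√(2 * π))⁻¹ * (gaussIntegral ((b - m) / √v) - gaussIntegral ((a - m) / √v)) := by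
  have hs : 0 < √(v : ℝ) := sqrt_pos.2 (by positivity)
  have hpdf :
      gaussianPDFReal m v = fun x => (√(2 * π))⁻¹ * (√v)⁻¹ * gauss (x / √v - m / √v) := by
    ext x
    simp only [gaussianPDFReal_def, gauss]
    rw [sqrt_mul' _ v.coe_nonneg, mul_inv, ← sub_div, div_pow, sq_sqrt v.coe_nonneg]
    ring_nf
  rw [measureReal_def, gaussianReal_apply_eq_integral m hv, ENNReal.toReal_ofReal
    (setIntegral_nonneg measurableSet_Ioo fun x _ => gaussianPDFReal_nonneg m v x),
    ← integral_Ioc_eq_integral_Ioo, ← intervalIntegral.integral_of_le hab, hpdf,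
    intervalIntegral.integral_const_mul,
    intervalIntegral.integral_comp_div_sub (fun z => gauss z) hs.ne', integral_gauss, smul_eq_mul,
    sub_div, sub_div]
  field_simp

lemma abs_signGap_le (ε x : ℝ) : |signGap ε x| ≤ 2 := by
  rcases Real.sign_apply_eq x with h | h | h <;>
    rcases Real.sign_apply_eq (x - ε * Real.sign x) with h' | h' | h' <;>
    rw [signGap, h', h] <;> norm_num

lemma measurable_signGap (ε : ℝ) : Measurable (signGap ε) :=
  Real.measurable_sign.sub
    (Real.measurable_sign.comp (measurable_id.sub (Real.measurable_sign.const_mul ε)))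

lemma integral_signGap_gaussianReal {m : ℝ} (hm : m ≠ 0) {ε : ℝ} (hε : 0 < ε) {v : ℝ≥0}
    (hv : v ≠ 0) :
    ∫ x, signGap ε x ∂gaussianReal m v = 2 * (√(2 * π))⁻¹ * gapProfile (ε / m) (m / √v) := by
  have := nullSingletonClass_gaussianReal (μ := m) hv
  rw [integral_signGap, gaussianReal_real_Ioo m hv hε.le,
    gaussianReal_real_Ioo m hv (by linarith), gapProfile]
  have hs : √(v : ℝ) ≠ 0 := (sqrt_pos.2 (by positivity)).ne'
  rw [show (ε - m) / √v = -((1 - ε / m) * (m / √v)) by field_simp; ring,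
    show (0 - m) / √v = -(m / √v) by ring,
    show (-ε - m) / √v = -((1 + ε / m) * (m / √v)) by field_simp; ring]
  simp only [gaussIntegral_neg]
  ring

lemma gaussGap_eq_sum {d : ℕ} (W : ℝ) {ε : ℝ} (hε : 0 < ε) (μ : Fin d → ℝ) {σ : Fin d → ℝ}
    (hσ : ∀ j, 0 < σ j) {n : ℕ} (hn : n ≠ 0) :
    gaussGap d W ε μ σ n
      = W * ∑ j, 2 * (√(2 * π))⁻¹ * gapProfile (ε / μ j) (μ j / σ j * √n) * μ j := by
  have hv (j : Fin d) : ((σ j) ^ 2 / n).toNNReal ≠ 0 := by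
    have := hσ j
    simp only [ne_eq, Real.toNNReal_eq_zero, not_le]
    positivity
  have hint (j : Fin d) : Integrable (signGap ε) (gaussianReal (μ j) ((σ j) ^ 2 / n).toNNReal) :=
    .of_bound (measurable_signGap ε).aestronglyMeasurable 2
      (ae_of_all _ fun x => abs_signGap_le ε x)
  change W * ∫ u : Fin d → ℝ, ∑ j, signGap ε (u j) * μ j ∂_ = _
  rw [integral_finsetSum _ fun j _ => (integrable_comp_eval (hint j)).mul_const _]
  congr 1
  refine Finset.sum_congr rfl fun j _ => ?_
  rcases eq_or_ne (μ j) 0 with h0 | h0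
  · simp [h0]
  rw [integral_mul_const, integral_comp_eval (hint j).aestronglyMeasurable,
    integral_signGap_gaussianReal h0 hε (hv j), Real.coe_toNNReal _ (by positivity),
    sqrt_div' _ (Nat.cast_nonneg n), sqrt_sq (hσ j).le, div_div_eq_mul_div, mul_div_right_comm]

lemma gaussGap_lt_gaussGap {d : ℕ} {W ε : ℝ} {μ σ : Fin d → ℝ} (hW : 0 < W) (hε : 0 < ε)
    (hμ : ∀ j, 0 ≤ μ j) (hμ0 : μ ≠ 0) (hσ : ∀ j, 0 < σ j) {m n : ℕ} (hm : m ≠ 0) (hn : n ≠ 0)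
    (h : ∀ j, 0 < μ j →
      gapProfile (ε / μ j) (μ j / σ j * √m) < gapProfile (ε / μ j) (μ j / σ j * √n)) :
    gaussGap d W ε μ σ m < gaussGap d W ε μ σ n := by
  rw [gaussGap_eq_sum W hε μ hσ hm, gaussGap_eq_sum W hε μ hσ hn]
  refine mul_lt_mul_of_pos_left (Finset.sum_lt_sum (fun j _ => ?_) ?_) hW
  · rcases (hμ j).eq_or_lt with h0 | hpos
    · simp [← h0]
    · gcongr; exact (h j hpos).le
  · obtain ⟨j, hj⟩ := Function.ne_iff.1 hμ0
    have hpos : 0 < μ j := (hμ j).lt_of_ne' hj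
    exact ⟨j, Finset.mem_univ j, by gcongr; exact h j hpos⟩

/-- In the weak adversary regime `ε < min_{j : μ(j) > 0} μ(j)`, there is a universal
constant `K0 > 0` such that `g_n` is strictly increasing for
`n < min_{j : μ(j) > 0} max{3/2, 2 log(1/(1 − ε/μ(j)))}·(σ(j)/μ(j))²` and strictly
decreasing for `n ≥ max_{j : μ(j) > 0} (K0 + 2 log(1/(1 − ε/μ(j))))·(σ(j)/μ(j))²`.
(The conditions `n < min_j …` and `n ≥ max_j …` are expressed as `∀ j` with `μ(j) > 0`.) -/
theorem gaussGap_two_stages :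
    ∃ K0 : ℝ, 0 < K0 ∧
      ∀ (d : ℕ) (W ε : ℝ) (μ σ : Fin d → ℝ),
        0 < W → 0 < ε → (∀ j, 0 ≤ μ j) → (∀ j, 0 < σ j) → μ ≠ 0 →
        (∀ j, 0 < μ j → ε < μ j) →
        (∀ m n : ℕ, 1 ≤ m → m < n →
          (∀ j, 0 < μ j →
            (n : ℝ) < max (3/2) (2 * Real.log (1/(1 - ε / μ j))) * (σ j / μ j) ^ 2) →
          gaussGap d W ε μ σ m < gaussGap d W ε μ σ n) ∧
        (∀ m n : ℕ, 1 ≤ m → m < n →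
          (∀ j, 0 < μ j →
            (K0 + 2 * Real.log (1/(1 - ε / μ j))) * (σ j / μ j) ^ 2 ≤ (m : ℝ)) →
          gaussGap d W ε μ σ n < gaussGap d W ε μ σ m) := by
  refine ⟨10, by norm_num, fun d W ε μ σ hW hε hμ hσ hμ0 hεμ => ⟨?_, ?_⟩⟩
  all_goals
    intro m n hm hmn hbound
    refine gaussGap_lt_gaussGap hW hε hμ hμ0 hσ (by omega) (by omega) fun j hj => ?_
    have hδ1 : ε / μ j < 1 := (div_lt_one hj).2 (hεμ j hj)
    have hscale : 0 < μ j / σ j := div_pos hj (hσ j)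
    have hmn' : μ j / σ j * √m < μ j / σ j * √n :=
      mul_lt_mul_of_pos_left (sqrt_lt_sqrt (Nat.cast_nonneg m) (Nat.cast_lt.2 hmn)) hscale
  · have hn := (div_mul_sqrt_lt_sqrt_iff hj (hσ j) (Nat.cast_nonneg n)).2 (hbound j hj)
    exact gapProfile_strictMonoOn (by positivity) hδ1 ⟨by positivity, hmn'.le.trans hn.le⟩
      ⟨by positivity, hn.le⟩ hmn'
  · have hm := (sqrt_le_div_mul_sqrt_iff hj (hσ j) (Nat.cast_nonneg m)).2 (hbound j hj)
    exact gapProfile_strictAntiOn (by positivity) hδ1 hm (hm.trans hmn'.le) hmn'
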